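/- Let X, Y ⊆ ω. There exists a non-order-reversing embedding of pcas of G^X into G^Y if and only if X is enumeration-reducible to Y. (An embedding f : G^X → G^Y is order-reversing if for all A, B ∈ G^X with A ⊆ B one has f(B) ⊆ f(A); non-order-reversing means not order-reversing.) -/

import Mathlib

namespace PCAEmb

/-! ### Oracle computability -/

/-- Codes for partial functions computable relative to an oracle. -/
inductive OCode : Type
  | zero : OCode
  | succ : OCode
  | left : OCode
  | right : OCode
  | oracle : OCode
  | pair : OCode → OCode → OCode
  | comp : OCode → OCode → OCode
  | prec : OCode → OCode → OCode
  | rfind' : OCode → OCode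

/-- Evaluation of an oracle code, relative to a (partial) oracle `O`. -/
def evalo (O : ℕ →. ℕ) : OCode → ℕ →. ℕ
  | .zero => pure 0
  | .succ => Nat.succ
  | .left => ↑fun n : ℕ => n.unpair.1
  | .right => ↑fun n : ℕ => n.unpair.2
  | .oracle => O
  | .pair cf cg => fun n => Nat.pair <$> evalo O cf n <*> evalo O cg n
  | .comp cf cg => fun n => evalo O cg n >>= evalo O cf
  | .prec cf cg =>
      Nat.unpaired fun a n =>
        n.rec (evalo O cf a) fun y IH => do
          let i ← IH
          evalo O cg (Nat.pair a (Nat.pair y i))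
  | .rfind' cf =>
      Nat.unpaired fun a m =>
        (Nat.rfind fun n => (fun x => x = 0) <$> evalo O cf (Nat.pair a (n + m))).map (· + m)

/-- The standard numbering of oracle codes. -/
def OCode.ofNat : ℕ → OCode
  | 0 => .zero
  | 1 => .succ
  | 2 => .left
  | 3 => .right
  | 4 => .oracle
  | n + 5 =>
    match n % 4 with
    | 0 => .pair (OCode.ofNat (n / 4).unpair.1) (OCode.ofNat (n / 4).unpair.2)
    | 1 => .comp (OCode.ofNat (n / 4).unpair.1) (OCode.ofNat (n / 4).unpair.2)
    | 2 => .prec (OCode.ofNat (n / 4).unpair.1) (OCode.ofNat (n / 4).unpair.2)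
    | _ => .rfind' (OCode.ofNat (n / 4).unpair.1)
  decreasing_by
    all_goals
      have h1 := Nat.unpair_left_le (n / 4)
      have h2 := Nat.unpair_right_le (n / 4)
      have h3 := Nat.div_le_self n 4
      omega

/-- The `e`-th Turing functional with oracle `O` : `Φ_e^O`. -/
def phi (O : ℕ →. ℕ) (e : ℕ) : ℕ →. ℕ := evalo O (OCode.ofNat e)

/-- The characteristic function of a set of naturals, as a (total) partial function. -/
noncomputable def chi (X : Set ℕ) : ℕ →. ℕ :=
  fun n => Part.some (X.indicator (fun _ => 1) n)

/-- `ψ` is partial computable relative to the oracle `O`. -/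
def RecursiveIn (O : ℕ →. ℕ) (ψ : ℕ →. ℕ) : Prop := ∃ c : OCode, evalo O c = ψ

/-- Turing reducibility of sets of naturals. -/
def TuringLE (X Y : Set ℕ) : Prop := RecursiveIn (chi Y) (chi X)

/-- A total function `d : ℕ → ℕ` is `Y`-computable. -/
def ComputableIn (Y : Set ℕ) (d : ℕ → ℕ) : Prop :=
  RecursiveIn (chi Y) (fun n => Part.some (d n))

/-- A binary relation on `ℕ` is `Y`-c.e. -/
def CEIn (Y : Set ℕ) (R : ℕ → ℕ → Prop) : Prop :=
  ∃ c : OCode, ∀ n m, R n m ↔ (evalo (chi Y) c (Nat.pair n m)).Dom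

/-- A set `W ⊆ ℕ` is `Y`-c.e. -/
def CE1In (Y : Set ℕ) (W : Set ℕ) : Prop :=
  ∃ c : OCode, ∀ n, n ∈ W ↔ (evalo (chi Y) c n).Dom

/-- The canonical finite set `D_u` with code `u` (binary coding). -/
def Du (u : ℕ) : Set ℕ := {k | u.testBit k}

/-- Enumeration reducibility: `Z ≤ₑ Y`. -/
def EnumLE (Z Y : Set ℕ) : Prop :=
  ∃ W : Set ℕ, CE1In ∅ W ∧ ∀ x, x ∈ Z ↔ ∃ u, Nat.pair x u ∈ W ∧ Du u ⊆ Y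

/-- The Turing jump `X'` of a set `X`. -/
def jump (X : Set ℕ) : Set ℕ := {e | (phi (chi X) e e).Dom}

/-- The halting set `K = {e : φ_e(e)↓}`. -/
def Khalt : Set ℕ := jump ∅

/-! ### Partial combinatory algebras -/

/-- `k·a·b` as a partial element. -/
def app2 {α : Type*} (app : α → α → Part α) (a b c : α) : Part α :=
  (app a b).bind fun x => app x c

/-- `s·a·b·c` as a partial element. -/
def app3 {α : Type*} (app : α → α → Part α) (a b c d : α) : Part α :=
  (app2 app a b c).bind fun x => app x d

/-- A partial applicative structure is a pca if it has (distinct) combinators `s` and `k`. -/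
def IsPCA {α : Type*} (app : α → α → Part α) : Prop :=
  ∃ s k : α, s ≠ k ∧
    (∀ a b : α, app2 app k a b = Part.some a) ∧
    (∀ a b : α, (app2 app s a b).Dom) ∧
    (∀ a b c : α,
      app3 app s a b c = (app a c).bind fun x => (app b c).bind fun y => app x y)

/-- An embedding of partial combinatory algebras: an injection that preserves
(defined) application. -/
def IsPCAEmbedding {α β : Type*} (appA : α → α → Part α) (appB : β → β → Part β)
    (f : α → β) : Prop :=
  Function.Injective f ∧ ∀ a a' c : α, c ∈ appA a a' → f c ∈ appB (f a) (f a')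

/-! ### Partial numberings -/

/-- `γ : ℕ ⇀ α` is a partial numbering (i.e. surjective). -/
def IsNumbering {α : Type*} (γ : ℕ →. α) : Prop := ∀ a : α, ∃ n, a ∈ γ n

/-- `d` is an `(a⊥, a⊤)`-decider for `X` with respect to `γ`. -/
def IsDecider {α : Type*} (γ : ℕ →. α) (abot atop : α) (X : Set ℕ) (d : ℕ → ℕ) : Prop :=
  ∀ n, (n ∉ X → γ (d n) = Part.some abot) ∧ (n ∈ X → γ (d n) = Part.some atop)

/-- `γ` has `Y`-c.e. inequivalence. -/
def CEInequiv {α : Type*} (Y : Set ℕ) (γ : ℕ →. α) : Prop :=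
  ∃ R : ℕ → ℕ → Prop, CEIn Y R ∧
    ∀ n m, (γ n).Dom → (γ m).Dom → (R n m ↔ γ n ≠ γ m)

/-- `γ` is a `Y`-effectively pca-valued partial numbering: the application is
represented on codes by a partial `Y`-computable function `ψ`. -/
def EffValued {α : Type*} (Y : Set ℕ) (app : α → α → Part α) (γ : ℕ →. α) : Prop :=
  ∃ ψ : ℕ →. ℕ, RecursiveIn (chi Y) ψ ∧
    ∀ (n m : ℕ) (a b c : α), a ∈ γ n → b ∈ γ m → c ∈ app a b →
      ∃ j, j ∈ ψ (Nat.pair n m) ∧ c ∈ γ j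

/-- `γ` is a strongly `Y`-effectively pca-valued partial numbering. -/
def StrongEffValued {α : Type*} (Y : Set ℕ) (app : α → α → Part α) (γ : ℕ →. α) : Prop :=
  ∃ ψ : ℕ →. ℕ, RecursiveIn (chi Y) ψ ∧
    (∀ (n m : ℕ) (a b c : α), a ∈ γ n → b ∈ γ m → c ∈ app a b →
      ∃ j, j ∈ ψ (Nat.pair n m) ∧ c ∈ γ j) ∧
    (∀ (n m k l : ℕ) (a b a' b' c : α), a ∈ γ n → b ∈ γ m → a' ∈ γ k → b' ∈ γ l →
      c ∈ app a b → c ∈ app a' b' → ψ (Nat.pair n m) = ψ (Nat.pair k l))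

/-! ### The models -/

/-- Kleene's first model relativized to `X`: application `n · m = Φ_n^X(m)`. -/
noncomputable def k1App (X : Set ℕ) : ℕ → ℕ → Part ℕ := fun n m => phi (chi X) n m

/-- A total function as a partial function. -/
def toPFun (g : ℕ → ℕ) : ℕ →. ℕ := fun n => Part.some (g n)

/-- Join `f ⊕ g` of two partial functions. -/
def pjoin (f g : ℕ →. ℕ) : ℕ →. ℕ := fun n =>
  if n % 2 = 0 then f (n / 2) else g (n / 2)

/-- The totalization of a partial function, as a partial element of `ℕ → ℕ`:
defined iff `ψ` is total. -/
def partToTotal (ψ : ℕ →. ℕ) : Part (ℕ → ℕ) :=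
  ⟨∀ n, (ψ n).Dom, fun H n => (ψ n).get (H n)⟩

/-- Application in Kleene's second model `K₂`: `g · h = Φ^{g⊕h}_{g 0}`,
defined iff this function is total. -/
def k2App (g h : ℕ → ℕ) : Part (ℕ → ℕ) :=
  partToTotal (phi (pjoin (toPFun g) (toPFun h)) (g 0))

/-- Application in van Oosten's sequential model `B`: `θ · ρ = Φ^{θ⊕ρ}_{θ 0}`
(always defined, as a partial function). -/
def bApp (θ ρ : ℕ →. ℕ) : Part (ℕ →. ℕ) :=
  Part.some (fun n => (θ 0).bind fun e => phi (pjoin θ ρ) e n)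

/-- Restriction of a partial applicative structure to a subset. -/
def subApp {α : Type*} (app : α → α → Part α) (P : α → Prop)
    (a b : Subtype P) : Part (Subtype P) :=
  (app a.1 b.1).bind fun c => Part.assert (P c) fun h => Part.some ⟨c, h⟩

/-- Carrier of `K₂^X` : the total `X`-computable functions. -/
def K2el (X : Set ℕ) : Type := {g : ℕ → ℕ // RecursiveIn (chi X) (toPFun g)}

/-- Application in `K₂^X`. -/
def k2XApp (X : Set ℕ) : K2el X → K2el X → Part (K2el X) :=
  subApp k2App _

/-- Carrier of `B^X` : the partial `X`-computable functions. -/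
def Bel (X : Set ℕ) : Type := {θ : ℕ →. ℕ // RecursiveIn (chi X) θ}

/-- Application in `B^X`. -/
def bXApp (X : Set ℕ) : Bel X → Bel X → Part (Bel X) :=
  subApp bApp _

/-- Application in Scott's graph model `G`. -/
def gApp (A B : Set ℕ) : Part (Set ℕ) :=
  Part.some {n | ∃ u, Nat.pair n u ∈ A ∧ Du u ⊆ B}

/-- Carrier of `G^Z` : the sets enumeration-reducible to `Z`. -/
def Gel (Z : Set ℕ) : Type := {A : Set ℕ // EnumLE A Z}

/-- Application in `G^Z`. -/
def gXApp (Z : Set ℕ) : Gel Z → Gel Z → Part (Gel Z) :=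
  subApp gApp _

/-- `X ⊕ X̄ = {2n : n ∈ X} ∪ {2n+1 : n ∉ X}`. -/
def joinCompl (X : Set ℕ) : Set ℕ :=
  {k | ∃ n, (k = 2 * n ∧ n ∈ X) ∨ (k = 2 * n + 1 ∧ n ∉ X)}

/-! ### The λ-calculus -/

/-- Untyped λ-terms (de Bruijn representation). -/
inductive Lam : Type
  | var : ℕ → Lam
  | app : Lam → Lam → Lam
  | abs : Lam → Lam

/-- Lift (shift up) the free variables `≥ d` of a term. -/
def Lam.lift : Lam → ℕ → Lam
  | .var n, d => if n < d then .var n else .var (n + 1)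
  | .app M N, d => .app (M.lift d) (N.lift d)
  | .abs M, d => .abs (M.lift (d + 1))

/-- Substitution `M[k := N]` (de Bruijn). -/
def Lam.subst : Lam → ℕ → Lam → Lam
  | .var n, k, N => if n = k then N else if k < n then .var (n - 1) else .var n
  | .app M M', k, N => .app (M.subst k N) (M'.subst k N)
  | .abs M, k, N => .abs (M.subst (k + 1) (N.lift 0))

/-- β-equivalence of λ-terms. -/
inductive BetaEq : Lam → Lam → Prop
  | beta (M N : Lam) : BetaEq (.app (.abs M) N) (M.subst 0 N)
  | refl (M : Lam) : BetaEq M M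
  | symm {M N : Lam} : BetaEq M N → BetaEq N M
  | trans {M N P : Lam} : BetaEq M N → BetaEq N P → BetaEq M P
  | appCongr {M M' N N' : Lam} :
      BetaEq M M' → BetaEq N N' → BetaEq (.app M N) (.app M' N')
  | absCongr {M M' : Lam} : BetaEq M M' → BetaEq (.abs M) (.abs M')

/-- βη-equivalence of λ-terms. -/
inductive BetaEtaEq : Lam → Lam → Prop
  | beta (M N : Lam) : BetaEtaEq (.app (.abs M) N) (M.subst 0 N)
  | eta (M : Lam) : BetaEtaEq (.abs (.app (M.lift 0) (.var 0))) M
  | refl (M : Lam) : BetaEtaEq M M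
  | symm {M N : Lam} : BetaEtaEq M N → BetaEtaEq N M
  | trans {M N P : Lam} : BetaEtaEq M N → BetaEtaEq N P → BetaEtaEq M P
  | appCongr {M M' N N' : Lam} :
      BetaEtaEq M M' → BetaEtaEq N N' → BetaEtaEq (.app M N) (.app M' N')
  | absCongr {M M' : Lam} : BetaEtaEq M M' → BetaEtaEq (.abs M) (.abs M')

def lamBetaSetoid : Setoid Lam := ⟨BetaEq, ⟨BetaEq.refl, BetaEq.symm, BetaEq.trans⟩⟩

def lamBetaEtaSetoid : Setoid Lam :=
  ⟨BetaEtaEq, ⟨BetaEtaEq.refl, BetaEtaEq.symm, BetaEtaEq.trans⟩⟩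

/-- The pca `λ` of λ-terms modulo β-equivalence. -/
def LamBeta : Type := Quotient lamBetaSetoid

/-- The pca `λη` of λ-terms modulo βη-equivalence. -/
def LamBetaEta : Type := Quotient lamBetaEtaSetoid

/-- Application in `λ` (total). -/
def lamBetaApp : LamBeta → LamBeta → Part LamBeta := fun a b =>
  Part.some (Quotient.map₂ Lam.app (fun _ _ h1 _ _ h2 => BetaEq.appCongr h1 h2) a b)

/-- Application in `λη` (total). -/
def lamBetaEtaApp : LamBetaEta → LamBetaEta → Part LamBetaEta := fun a b =>
  Part.some (Quotient.map₂ Lam.app (fun _ _ h1 _ _ h2 => BetaEtaEq.appCongr h1 h2) a b)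



/-! ### Infrastructure for the proof of stmt19 -/

section Infra

/-! #### Bridge between OCode and mathlib's partial recursive codes -/

def toCode : OCode → Nat.Partrec.Code
  | .zero => .zero
  | .succ => .succ
  | .left => .left
  | .right => .right
  | .oracle => .zero
  | .pair a b => .pair (toCode a) (toCode b)
  | .comp a b => .comp (toCode a) (toCode b)
  | .prec a b => .prec (toCode a) (toCode b)
  | .rfind' a => .rfind' (toCode a)

theorem chi_empty : chi ∅ = fun _ => Part.some 0 := by
  funext n; simp [chi]

theorem evalo_toCode (c : OCode) : evalo (chi ∅) c = (toCode c).eval := by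
  induction c with
  | oracle => rw [chi_empty]; rfl
  | pair a b iha ihb => simp only [evalo, toCode, Nat.Partrec.Code.eval, iha, ihb]; rfl
  | comp a b iha ihb => simp only [evalo, toCode, Nat.Partrec.Code.eval, iha, ihb]; rfl
  | prec a b iha ihb => simp only [evalo, toCode, Nat.Partrec.Code.eval, iha, ihb]; rfl
  | rfind' a iha => simp only [evalo, toCode, Nat.Partrec.Code.eval, iha]; rfl
  | _ => rfl

def ofCode : Nat.Partrec.Code → OCode
  | .zero => .zero
  | .succ => .succ
  | .left => .left
  | .right => .right
  | .pair a b => .pair (ofCode a) (ofCode b)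
  | .comp a b => .comp (ofCode a) (ofCode b)
  | .prec a b => .prec (ofCode a) (ofCode b)
  | .rfind' a => .rfind' (ofCode a)

theorem evalo_ofCode (O : ℕ →. ℕ) (c : Nat.Partrec.Code) :
    evalo O (ofCode c) = c.eval := by
  induction c <;> simp only [evalo, ofCode, Nat.Partrec.Code.eval, *] <;> rfl

/-- Σ1 sets with a primitive recursive matrix. -/
def CeW (W : Set ℕ) : Prop :=
  ∃ g : ℕ → ℕ → Bool, Primrec₂ g ∧ ∀ n, n ∈ W ↔ ∃ k, g n k = true

theorem ce1In_iff_ceW {W : Set ℕ} : CE1In ∅ W ↔ CeW W := by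
  constructor
  · rintro ⟨c, hc⟩
    refine ⟨fun n k => (Nat.Partrec.Code.evaln k (toCode c) n).isSome, ?_, ?_⟩
    · have h1 : Primrec fun p : ℕ × ℕ => ((p.2, toCode c), p.1) :=
        (Primrec.pair Primrec.snd (Primrec.const (toCode c))).pair Primrec.fst
      exact (Primrec.option_isSome.comp
        (Nat.Partrec.Code.primrec_evaln.comp h1)).to₂
    · intro n
      rw [hc n, evalo_toCode, Part.dom_iff_mem]
      constructor
      · rintro ⟨x, hx⟩
        obtain ⟨k, hk⟩ := Nat.Partrec.Code.evaln_complete.1 hx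
        exact ⟨k, by simp [Option.isSome_iff_exists]; exact ⟨x, hk⟩⟩
      · rintro ⟨k, hk⟩
        rw [Option.isSome_iff_exists] at hk
        obtain ⟨x, hx⟩ := hk
        exact ⟨x, Nat.Partrec.Code.evaln_complete.2 ⟨k, hx⟩⟩
  · rintro ⟨g, hg, hW⟩
    have hp : Partrec₂ fun n k => (Part.some (g n k) : Part Bool) :=
      Computable₂.partrec₂ (Primrec₂.to_comp hg)
    have hN : Nat.Partrec fun n => Nat.rfind fun k => (Part.some (g n k) : Part Bool) :=
      Partrec.nat_iff.1 (Partrec.rfind hp)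
    obtain ⟨c, hc⟩ := Nat.Partrec.Code.exists_code.1 hN
    refine ⟨ofCode c, fun n => ?_⟩
    rw [evalo_ofCode, hc, hW n]; erw [Nat.rfind_dom]
    constructor
    · rintro ⟨k, hk⟩
      exact ⟨k, by simp [hk], fun {m} _ => trivial⟩
    · rintro ⟨m, hm, _⟩
      simp at hm
      exact ⟨m, hm⟩

/-! #### Primitive recursive toolbox -/

def bAny (n : ℕ) (p : ℕ → Bool) : Bool := Nat.rec false (fun i ih => ih || p i) n

def bAll (n : ℕ) (p : ℕ → Bool) : Bool := Nat.rec true (fun i ih => ih && p i) n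

theorem bAny_iff {n : ℕ} {p : ℕ → Bool} : bAny n p = true ↔ ∃ i < n, p i = true := by
  induction n with
  | zero => simp [bAny]
  | succ m ih =>
    show (bAny m p || p m) = true ↔ _
    simp only [Bool.or_eq_true, ih]
    constructor
    · rintro (⟨i, hi, hp⟩ | hp)
      exacts [⟨i, Nat.lt_succ_of_lt hi, hp⟩, ⟨m, Nat.lt_succ_self m, hp⟩]
    · rintro ⟨i, hi, hp⟩
      rcases Nat.lt_succ_iff_lt_or_eq.1 hi with h | rfl
      exacts [Or.inl ⟨i, h, hp⟩, Or.inr hp]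

theorem bAll_iff {n : ℕ} {p : ℕ → Bool} : bAll n p = true ↔ ∀ i < n, p i = true := by
  induction n with
  | zero => simp [bAll]
  | succ m ih =>
    show (bAll m p && p m) = true ↔ _
    simp only [Bool.and_eq_true, ih]
    constructor
    · rintro ⟨h1, h2⟩ i hi
      rcases Nat.lt_succ_iff_lt_or_eq.1 hi with h | rfl
      exacts [h1 i h, h2]
    · intro h
      exact ⟨fun i hi => h i (Nat.lt_succ_of_lt hi), h m (Nat.lt_succ_self m)⟩

theorem primrec_bAny {α : Type*} [Primcodable α] {f : α → ℕ} {p : α → ℕ → Bool}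
    (hf : Primrec f) (hp : Primrec₂ p) : Primrec fun a => bAny (f a) (p a) := by
  have h : Primrec₂ fun (a : α) (q : ℕ × Bool) => q.2 || p a q.1 :=
    (Primrec.dom_bool₂ (· || ·)).comp₂ (Primrec.snd.comp Primrec.snd).to₂
      (hp.comp Primrec.fst (Primrec.fst.comp Primrec.snd)).to₂
  exact (Primrec.nat_rec' hf (Primrec.const false) h).of_eq fun a => rfl

theorem primrec_bAll {α : Type*} [Primcodable α] {f : α → ℕ} {p : α → ℕ → Bool}
    (hf : Primrec f) (hp : Primrec₂ p) : Primrec fun a => bAll (f a) (p a) := by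
  have h : Primrec₂ fun (a : α) (q : ℕ × Bool) => q.2 && p a q.1 :=
    (Primrec.dom_bool₂ (· && ·)).comp₂ (Primrec.snd.comp Primrec.snd).to₂
      (hp.comp Primrec.fst (Primrec.fst.comp Primrec.snd)).to₂
  exact (Primrec.nat_rec' hf (Primrec.const true) h).of_eq fun a => rfl

def pow2 (n : ℕ) : ℕ := Nat.rec 1 (fun _ ih => 2 * ih) n

theorem pow2_eq (n : ℕ) : pow2 n = 2 ^ n := by
  induction n with
  | zero => rfl
  | succ m ih => show 2 * pow2 m = _; rw [ih, pow_succ]; ring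

theorem primrec_pow2 : Primrec pow2 := by
  have h : Primrec₂ fun (_ : ℕ) (q : ℕ × ℕ) => 2 * q.2 :=
    (Primrec.nat_mul.comp (Primrec.const 2) (Primrec.snd.comp Primrec.snd)).to₂
  exact (Primrec.nat_rec' Primrec.id (Primrec.const 1) h).of_eq fun a => rfl

theorem primrec_testBit : Primrec₂ Nat.testBit := by
  have h : Primrec₂ fun (x i : ℕ) => decide (x / pow2 i % 2 = 1) :=
    (Primrec.eq.comp
      (Primrec.nat_mod.comp (Primrec.nat_div.comp Primrec.fst
        (primrec_pow2.comp Primrec.snd)) (Primrec.const 2))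
      (Primrec.const 1)).decide.to₂
  exact h.of_eq fun x i => by rw [Nat.testBit_eq_decide_div_mod_eq, pow2_eq]

theorem mem_Du {u k : ℕ} : k ∈ Du u ↔ u.testBit k = true := Iff.rfl

theorem Du_zero : Du 0 = ∅ := by
  ext k; simp [mem_Du]

theorem Du_two_pow {n : ℕ} : Du (2 ^ n) = {n} := by
  ext k; simp [mem_Du, Nat.testBit_two_pow]; exact comm

theorem Du_lor {u v : ℕ} : Du (u ||| v) = Du u ∪ Du v := by
  ext k; simp [mem_Du, Nat.testBit_lor u v k, Set.mem_union]

theorem lt_of_mem_Du {u k : ℕ} (h : k ∈ Du u) : k < u := by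
  by_contra hk
  push_neg at hk
  have : u < 2 ^ k := lt_of_le_of_lt hk (Nat.lt_two_pow_self (n := k))
  rw [mem_Du, Nat.testBit_lt_two_pow this] at h
  exact Bool.false_ne_true h

theorem Du_finite (u : ℕ) : (Du u).Finite :=
  Set.Finite.subset (Set.finite_Iio u) fun _ h => lt_of_mem_Du h

/-- Boolean test for `Du u ⊆ Du c`. -/
def subB (u c : ℕ) : Bool := bAll u fun i => !u.testBit i || c.testBit i

theorem subB_iff {u c : ℕ} : subB u c = true ↔ Du u ⊆ Du c := by
  rw [subB, bAll_iff]
  constructor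
  · intro h i hi
    have hlt := lt_of_mem_Du hi
    have := h i hlt
    rw [mem_Du] at hi ⊢
    simpa [hi] using this
  · intro h i _
    by_cases hb : u.testBit i = true
    · simpa [hb, mem_Du] using h (mem_Du.2 hb)
    · simp [Bool.not_eq_true] at hb; simp [hb]

theorem primrec_subB : Primrec₂ subB := by
  have h : Primrec₂ fun (q : ℕ × ℕ) (i : ℕ) => !q.1.testBit i || q.2.testBit i :=
    ((Primrec.dom_bool₂ (· || ·)).comp
      ((Primrec.dom_bool (!·)).comp (primrec_testBit.comp (Primrec.fst.comp Primrec.fst) Primrec.snd))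
      (primrec_testBit.comp (Primrec.snd.comp Primrec.fst) Primrec.snd)).to₂
  exact primrec_bAll Primrec.fst h

end Infra

section Nice

/-- The application operation of the graph model, on plain sets. -/
def appset (A B : Set ℕ) : Set ℕ := {n | ∃ u, Nat.pair n u ∈ A ∧ Du u ⊆ B}

theorem gApp_eq (A B : Set ℕ) : gApp A B = Part.some (appset A B) := rfl

/-- Monotonicity of graph application. -/
theorem appset_mono {A A' B B' : Set ℕ} (hA : A ⊆ A') (hB : B ⊆ B') :
    appset A B ⊆ appset A' B' := by
  rintro n ⟨u, hu, hsub⟩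
  exact ⟨u, hA hu, fun i hi => hB (hsub hi)⟩

/-- A "nice" witness for `S ≤ₑ Y`: correct, monotone in the code, and Σ1. -/
def Nice (Y S W : Set ℕ) : Prop :=
  CeW W ∧ (∀ x c c', Nat.pair x c ∈ W → Du c ⊆ Du c' → Nat.pair x c' ∈ W) ∧
  (∀ x, x ∈ S ↔ ∃ c, Nat.pair x c ∈ W ∧ Du c ⊆ Y)

/-- Combine finitely many monotone code witnesses into one. -/
theorem combine {Y : Set ℕ} {S : ℕ → Set ℕ}
    (mono : ∀ c c', Du c ⊆ Du c' → S c ⊆ S c') {s : Set ℕ} (hfin : s.Finite)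
    (h : ∀ i ∈ s, ∃ c, Du c ⊆ Y ∧ i ∈ S c) : ∃ c, Du c ⊆ Y ∧ s ⊆ S c := by
  refine Set.Finite.induction_on
    (motive := fun s _ => (∀ i ∈ s, ∃ c, Du c ⊆ Y ∧ i ∈ S c) → ∃ c, Du c ⊆ Y ∧ s ⊆ S c)
    s hfin (fun _ => ⟨0, by simp [Du_zero], by simp⟩) ?_ h
  rintro a s ha hs ih h
  obtain ⟨c₁, hc₁Y, hc₁⟩ := h a (Set.mem_insert a s)
  obtain ⟨c₂, hc₂Y, hc₂⟩ := ih fun i hi => h i (Set.mem_insert_of_mem a hi)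
  refine ⟨c₁ ||| c₂, ?_, ?_⟩
  · rw [Du_lor]; exact Set.union_subset hc₁Y hc₂Y
  · intro i hi
    rcases Set.mem_insert_iff.1 hi with rfl | hi
    · exact mono c₁ _ (by rw [Du_lor]; exact Set.subset_union_left) hc₁
    · exact mono c₂ _ (by rw [Du_lor]; exact Set.subset_union_right) (hc₂ hi)

/-- Combine finitely many ℕ-monotone witnesses into one. -/
theorem combineNat {S : ℕ → Set ℕ} (mono : ∀ k k', k ≤ k' → S k ⊆ S k')
    {s : Set ℕ} (hfin : s.Finite) (h : ∀ i ∈ s, ∃ k, i ∈ S k) : ∃ k, s ⊆ S k := by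
  refine Set.Finite.induction_on
    (motive := fun s _ => (∀ i ∈ s, ∃ k, i ∈ S k) → ∃ k, s ⊆ S k)
    s hfin (fun _ => ⟨0, by simp⟩) ?_ h
  rintro a s ha hs ih h
  obtain ⟨k₁, hk₁⟩ := h a (Set.mem_insert a s)
  obtain ⟨k₂, hk₂⟩ := ih fun i hi => h i (Set.mem_insert_of_mem a hi)
  refine ⟨max k₁ k₂, fun i hi => ?_⟩
  rcases Set.mem_insert_iff.1 hi with rfl | hi
  · exact mono k₁ _ (le_max_left _ _) hk₁
  · exact mono k₂ _ (le_max_right _ _) (hk₂ hi)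

/-- Any enumeration reduction can be upgraded to a nice witness. -/
theorem nice_of_enumLE {Y S : Set ℕ} (h : EnumLE S Y) : ∃ W, Nice Y S W := by
  obtain ⟨W₀, hce, hiff⟩ := h
  obtain ⟨g, hg, hgW⟩ := ce1In_iff_ceW.1 hce
  refine ⟨{q | ∃ w, Nat.pair q.unpair.1 w ∈ W₀ ∧ Du w ⊆ Du q.unpair.2}, ?_, ?_, ?_⟩
  · refine ⟨fun q k => g (Nat.pair q.unpair.1 k.unpair.1) k.unpair.2 &&
      subB k.unpair.1 q.unpair.2, ?_, ?_⟩
    · have u1 : Primrec fun n : ℕ => n.unpair.1 := Primrec.fst.comp Primrec.unpair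
      have u2 : Primrec fun n : ℕ => n.unpair.2 := Primrec.snd.comp Primrec.unpair
      exact ((Primrec.dom_bool₂ (· && ·)).comp
        (hg.comp (Primrec₂.natPair.comp (u1.comp Primrec.fst) (u1.comp Primrec.snd))
          (u2.comp Primrec.snd))
        (primrec_subB.comp (u1.comp Primrec.snd) (u2.comp Primrec.fst))).to₂
    · intro q
      constructor
      · rintro ⟨w, hw, hsub⟩
        obtain ⟨k, hk⟩ := (hgW _).1 hw
        exact ⟨Nat.pair w k, by simp [hk, subB_iff.2 hsub]⟩
      · rintro ⟨k, hk⟩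
        simp only [Bool.and_eq_true] at hk
        exact ⟨k.unpair.1, (hgW _).2 ⟨_, hk.1⟩, subB_iff.1 hk.2⟩
  · rintro x c c' ⟨w, hw, hsub⟩ hcc
    refine ⟨w, by simpa using hw, ?_⟩
    simp only [Nat.unpair_pair] at hsub ⊢
    exact Set.Subset.trans hsub hcc
  · intro x
    rw [hiff x]
    constructor
    · rintro ⟨u, hu, huY⟩
      exact ⟨u, ⟨u, by simpa using hu, by simp⟩, huY⟩
    · rintro ⟨c, ⟨w, hw, hsub⟩, hcY⟩
      exact ⟨w, by simpa using hw, Set.Subset.trans (by simpa using hsub) hcY⟩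

theorem enumLE_of_nice {Y S W : Set ℕ} (h : Nice Y S W) : EnumLE S Y :=
  ⟨W, ce1In_iff_ceW.2 h.1, h.2.2⟩

end Nice

section NiceClosure

theorem pu1 : Primrec fun n : ℕ => n.unpair.1 := Primrec.fst.comp Primrec.unpair
theorem pu2 : Primrec fun n : ℕ => n.unpair.2 := Primrec.snd.comp Primrec.unpair

theorem bAny_mono {m n : ℕ} {p : ℕ → Bool} (h : m ≤ n) (hm : bAny m p = true) :
    bAny n p = true := by
  rw [bAny_iff] at hm ⊢
  obtain ⟨i, hi, hp⟩ := hm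
  exact ⟨i, lt_of_lt_of_le hi h, hp⟩

theorem nice_congr {Y S S' W : Set ℕ} (hSS : S = S') (h : Nice Y S W) : Nice Y S' W := by
  rwa [hSS] at h

theorem nice_comap {Y S W : Set ℕ} (h : Nice Y S W) {f : ℕ → ℕ} (hf : Primrec f) :
    Nice Y {n | f n ∈ S} {q | Nat.pair (f q.unpair.1) q.unpair.2 ∈ W} := by
  obtain ⟨⟨g, hg, hgW⟩, hmono, hiff⟩ := h
  refine ⟨⟨fun q k => g (Nat.pair (f q.unpair.1) q.unpair.2) k, ?_, ?_⟩, ?_, ?_⟩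
  · exact (hg.comp (Primrec₂.natPair.comp (hf.comp (pu1.comp Primrec.fst))
      (pu2.comp Primrec.fst)) Primrec.snd).to₂
  · intro q; exact hgW _
  · intro x c c' hx hcc
    simp only [Set.mem_setOf_eq, Nat.unpair_pair] at hx ⊢
    exact hmono _ _ _ hx hcc
  · intro x
    rw [Set.mem_setOf_eq, hiff (f x)]
    simp [Nat.unpair_pair]

theorem nice_union {Y S₁ S₂ W₁ W₂ : Set ℕ} (h₁ : Nice Y S₁ W₁) (h₂ : Nice Y S₂ W₂) :
    Nice Y (S₁ ∪ S₂) (W₁ ∪ W₂) := by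
  obtain ⟨⟨g₁, hg₁, hgW₁⟩, hm₁, hi₁⟩ := h₁
  obtain ⟨⟨g₂, hg₂, hgW₂⟩, hm₂, hi₂⟩ := h₂
  refine ⟨⟨fun q k => g₁ q k || g₂ q k, ?_, ?_⟩, ?_, ?_⟩
  · exact ((Primrec.dom_bool₂ (· || ·)).comp (hg₁.comp Primrec.fst Primrec.snd)
      (hg₂.comp Primrec.fst Primrec.snd)).to₂
  · intro q
    simp only [Set.mem_union, hgW₁, hgW₂, Bool.or_eq_true]
    constructor
    · rintro (⟨k, hk⟩ | ⟨k, hk⟩) <;> exact ⟨k, by simp [hk]⟩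
    · rintro ⟨k, hk | hk⟩
      exacts [Or.inl ⟨k, hk⟩, Or.inr ⟨k, hk⟩]
  · rintro x c c' (hx | hx) hcc
    exacts [Or.inl (hm₁ _ _ _ hx hcc), Or.inr (hm₂ _ _ _ hx hcc)]
  · intro x
    simp only [Set.mem_union, hi₁ x, hi₂ x]
    constructor
    · rintro (⟨c, hc, hcY⟩ | ⟨c, hc, hcY⟩)
      exacts [⟨c, Or.inl hc, hcY⟩, ⟨c, Or.inr hc, hcY⟩]
    · rintro ⟨c, hc | hc, hcY⟩
      exacts [Or.inl ⟨c, hc, hcY⟩, Or.inr ⟨c, hc, hcY⟩]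

theorem nice_sep {Y S W : Set ℕ} (h : Nice Y S W) {p : ℕ → Bool} (hp : Primrec p)
    {f : ℕ → ℕ} (hf : Primrec f) :
    Nice Y {n | p n = true ∧ f n ∈ S}
      {q | p q.unpair.1 = true ∧ Nat.pair (f q.unpair.1) q.unpair.2 ∈ W} := by
  obtain ⟨⟨g, hg, hgW⟩, hmono, hiff⟩ := h
  refine ⟨⟨fun q k => p q.unpair.1 && g (Nat.pair (f q.unpair.1) q.unpair.2) k, ?_, ?_⟩, ?_, ?_⟩
  · exact ((Primrec.dom_bool₂ (· && ·)).comp (hp.comp (pu1.comp Primrec.fst))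
      (hg.comp (Primrec₂.natPair.comp (hf.comp (pu1.comp Primrec.fst))
        (pu2.comp Primrec.fst)) Primrec.snd)).to₂
  · intro q
    simp only [Set.mem_setOf_eq, hgW, Bool.and_eq_true]
    constructor
    · rintro ⟨hpq, k, hk⟩; exact ⟨k, hpq, hk⟩
    · rintro ⟨k, hpq, hk⟩; exact ⟨hpq, k, hk⟩
  · rintro x c c' ⟨hpx, hx⟩ hcc
    simp only [Set.mem_setOf_eq, Nat.unpair_pair] at hpx hx ⊢
    exact ⟨hpx, hmono _ _ _ hx hcc⟩
  · intro x
    simp only [Set.mem_setOf_eq, hiff (f x), Nat.unpair_pair]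
    constructor
    · rintro ⟨hpx, c, hc, hcY⟩; exact ⟨c, ⟨hpx, hc⟩, hcY⟩
    · rintro ⟨c, ⟨hpx, hc⟩, hcY⟩; exact ⟨hpx, c, hc, hcY⟩

theorem nice_of_decidable {Y : Set ℕ} {p : ℕ → Bool} (hp : Primrec p) :
    Nice Y {n | p n = true} {q | p q.unpair.1 = true} := by
  refine ⟨⟨fun q _ => p q.unpair.1, ?_, ?_⟩, ?_, ?_⟩
  · exact (hp.comp (pu1.comp Primrec.fst)).to₂
  · intro q; simp
  · intro x c c' hx _; simpa using hx
  · intro x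
    constructor
    · intro hx; exact ⟨0, by simpa using hx, by simp [Du_zero]⟩
    · rintro ⟨c, hc, _⟩; simpa using hc

theorem nice_of_ceW {Y S : Set ℕ} (h : CeW S) : Nice Y S {q | q.unpair.1 ∈ S} := by
  obtain ⟨g, hg, hgW⟩ := h
  refine ⟨⟨fun q k => g q.unpair.1 k, ?_, ?_⟩, ?_, ?_⟩
  · exact (hg.comp (pu1.comp Primrec.fst) Primrec.snd).to₂
  · intro q; exact hgW _
  · intro x c c' hx _; simpa using hx
  · intro x
    constructor
    · intro hx; exact ⟨0, by simpa using hx, by simp [Du_zero]⟩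
    · rintro ⟨c, hc, _⟩; simpa using hc

/-- Parametrized graph application of "paired" sets. -/
def AppP (S T : Set ℕ) : Set ℕ :=
  {p | ∃ u, Nat.pair p.unpair.1 (Nat.pair p.unpair.2 u) ∈ S ∧ ∀ i ∈ Du u, Nat.pair p.unpair.1 i ∈ T}

theorem mem_AppP {S T : Set ℕ} {n z : ℕ} :
    Nat.pair n z ∈ AppP S T ↔ ∃ u, Nat.pair n (Nat.pair z u) ∈ S ∧ ∀ i ∈ Du u, Nat.pair n i ∈ T := by
  simp [AppP]

set_option maxHeartbeats 2000000 in
theorem nice_AppP {Y S T WS WT : Set ℕ} (hS : Nice Y S WS) (hT : Nice Y T WT) :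
    Nice Y (AppP S T)
      {q | ∃ u, Nat.pair (Nat.pair q.unpair.1.unpair.1 (Nat.pair q.unpair.1.unpair.2 u)) q.unpair.2 ∈ WS ∧
        ∀ i ∈ Du u, Nat.pair (Nat.pair q.unpair.1.unpair.1 i) q.unpair.2 ∈ WT} := by
  obtain ⟨⟨gS, hgS, hgSW⟩, hmS, hiS⟩ := hS
  obtain ⟨⟨gT, hgT, hgTW⟩, hmT, hiT⟩ := hT
  refine ⟨⟨fun q k =>
      bAny k.unpair.2 (fun t => gS (Nat.pair (Nat.pair q.unpair.1.unpair.1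
        (Nat.pair q.unpair.1.unpair.2 k.unpair.1)) q.unpair.2) t) &&
      bAll k.unpair.1 (fun i => !k.unpair.1.testBit i ||
        bAny k.unpair.2 (fun t => gT (Nat.pair (Nat.pair q.unpair.1.unpair.1 i) q.unpair.2) t)),
      ?_, ?_⟩, ?_, ?_⟩
  · -- primrec
    have hq1 : Primrec fun a : ℕ × ℕ => a.1.unpair.1.unpair.1 :=
      pu1.comp (pu1.comp Primrec.fst)
    have hq2 : Primrec fun a : ℕ × ℕ => a.1.unpair.1.unpair.2 :=
      pu2.comp (pu1.comp Primrec.fst)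
    have hqc : Primrec fun a : ℕ × ℕ => a.1.unpair.2 := pu2.comp Primrec.fst
    have hku : Primrec fun a : ℕ × ℕ => a.2.unpair.1 := pu1.comp Primrec.snd
    have hks : Primrec fun a : ℕ × ℕ => a.2.unpair.2 := pu2.comp Primrec.snd
    have h1 : Primrec fun a : ℕ × ℕ => bAny a.2.unpair.2 (fun t =>
        gS (Nat.pair (Nat.pair a.1.unpair.1.unpair.1
          (Nat.pair a.1.unpair.1.unpair.2 a.2.unpair.1)) a.1.unpair.2) t) := by
      refine primrec_bAny hks ?_
      exact (hgS.comp (Primrec₂.natPair.comp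
        (Primrec₂.natPair.comp (hq1.comp Primrec.fst)
          (Primrec₂.natPair.comp (hq2.comp Primrec.fst) (hku.comp Primrec.fst)))
        (hqc.comp Primrec.fst)) Primrec.snd).to₂
    have h2b : Primrec₂ fun (a : ℕ × ℕ) (i : ℕ) => bAny a.2.unpair.2 (fun t =>
        gT (Nat.pair (Nat.pair a.1.unpair.1.unpair.1 i) a.1.unpair.2) t) := by
      have hinner : Primrec₂ fun (w : (ℕ × ℕ) × ℕ) (t : ℕ) =>
          gT (Nat.pair (Nat.pair w.1.1.unpair.1.unpair.1 w.2) w.1.1.unpair.2) t :=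
        (hgT.comp (Primrec₂.natPair.comp
          (Primrec₂.natPair.comp (pu1.comp (pu1.comp (Primrec.fst.comp (Primrec.fst.comp Primrec.fst))))
            (Primrec.snd.comp Primrec.fst))
          (pu2.comp (Primrec.fst.comp (Primrec.fst.comp Primrec.fst)))) Primrec.snd).to₂
      exact (primrec_bAny (pu2.comp (Primrec.snd.comp Primrec.fst)) hinner).to₂
    have hnot : Primrec₂ fun (a : ℕ × ℕ) (i : ℕ) => !a.2.unpair.1.testBit i :=
      ((Primrec.dom_bool (!·)).comp
        (primrec_testBit.comp (pu1.comp (Primrec.snd.comp Primrec.fst)) Primrec.snd)).to₂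
    have h2 : Primrec fun a : ℕ × ℕ => bAll a.2.unpair.1 (fun i =>
        !a.2.unpair.1.testBit i ||
        bAny a.2.unpair.2 (fun t => gT (Nat.pair (Nat.pair a.1.unpair.1.unpair.1 i) a.1.unpair.2) t)) :=
      primrec_bAll hku ((Primrec.dom_bool₂ (· || ·)).comp₂ hnot h2b)
    exact ((Primrec.dom_bool₂ (· && ·)).comp h1 h2).to₂
  · -- ceW correctness
    intro q
    constructor
    · rintro ⟨u, huS, huT⟩
      obtain ⟨s₁, hs₁⟩ := (hgSW _).1 huS
      have hmono : ∀ k k', k ≤ k' →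
          {i | bAny k (fun t => gT (Nat.pair (Nat.pair q.unpair.1.unpair.1 i) q.unpair.2) t) = true} ⊆
          {i | bAny k' (fun t => gT (Nat.pair (Nat.pair q.unpair.1.unpair.1 i) q.unpair.2) t) = true} :=
        fun k k' hk i hi => bAny_mono hk hi
      obtain ⟨s₂, hs₂⟩ := combineNat hmono (Du_finite u) (fun i hi => by
        obtain ⟨t, ht⟩ := (hgTW _).1 (huT i hi)
        exact ⟨t + 1, bAny_iff.2 ⟨t, Nat.lt_succ_self t, ht⟩⟩)
      refine ⟨Nat.pair u (max (s₁ + 1) s₂), ?_⟩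
      simp only [Nat.unpair_pair, Bool.and_eq_true]
      constructor
      · exact bAny_mono (le_max_left _ _) (bAny_iff.2 ⟨s₁, Nat.lt_succ_self s₁, hs₁⟩)
      · rw [bAll_iff]
        intro i hi
        by_cases hb : u.testBit i = true
        · have := hs₂ (mem_Du.2 hb)
          simp only [Set.mem_setOf_eq] at this
          simp [hb, bAny_mono (le_max_right _ _) this]
        · simp [Bool.not_eq_true] at hb; simp [hb]
    · rintro ⟨k, hk⟩
      simp only [Bool.and_eq_true] at hk
      obtain ⟨h1, h2⟩ := hk
      obtain ⟨t, _, ht⟩ := bAny_iff.1 h1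
      refine ⟨k.unpair.1, (hgSW _).2 ⟨t, ht⟩, ?_⟩
      intro i hi
      rw [bAll_iff] at h2
      have := h2 i (lt_of_mem_Du hi)
      rw [mem_Du] at hi
      simp only [hi, Bool.not_true, Bool.false_or] at this
      obtain ⟨t', _, ht'⟩ := bAny_iff.1 this
      exact (hgTW _).2 ⟨t', ht'⟩
  · -- monotone
    rintro x c c' ⟨u, huS, huT⟩ hcc
    simp only [Set.mem_setOf_eq, Nat.unpair_pair] at huS huT ⊢
    exact ⟨u, hmS _ _ _ huS hcc, fun i hi => hmT _ _ _ (huT i hi) hcc⟩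
  · -- correctness
    intro x
    constructor
    · rintro ⟨u, huS, huT⟩
      obtain ⟨c₁, hc₁, hc₁Y⟩ := (hiS _).1 huS
      simp only [Set.mem_setOf_eq, Nat.unpair_pair] at *
      have hmono : ∀ c c', Du c ⊆ Du c' →
          {i | Nat.pair (Nat.pair x.unpair.1 i) c ∈ WT} ⊆
          {i | Nat.pair (Nat.pair x.unpair.1 i) c' ∈ WT} :=
        fun c c' hcc i hi => hmT _ _ _ hi hcc
      obtain ⟨c₂, hc₂Y, hc₂⟩ := combine hmono (Du_finite u) (fun i hi => by
        obtain ⟨c, hc, hcY⟩ := (hiT _).1 (huT i hi)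
        exact ⟨c, hcY, hc⟩)
      refine ⟨c₁ ||| c₂, ⟨u, ?_, ?_⟩, by rw [Du_lor]; exact Set.union_subset hc₁Y hc₂Y⟩
      · exact hmS _ _ _ hc₁ (by rw [Du_lor]; exact Set.subset_union_left)
      · intro i hi
        exact hmT _ _ _ (hc₂ hi) (by rw [Du_lor]; exact Set.subset_union_right)
    · rintro ⟨c, ⟨u, huS, huT⟩, hcY⟩
      simp only [Nat.unpair_pair] at huS huT
      exact ⟨u, (hiS _).2 ⟨c, huS, hcY⟩, fun i hi => (hiT _).2 ⟨c, huT i hi, hcY⟩⟩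

/-- `pairify S` is the paired set with constant sections `S`. -/
def pairify (S : Set ℕ) : Set ℕ := {p | p.unpair.2 ∈ S}

theorem nice_pairify {Y S W : Set ℕ} (h : Nice Y S W) :
    ∃ W', Nice Y (pairify S) W' := ⟨_, nice_comap h pu2⟩

theorem appset_eq_comap_AppP (S T : Set ℕ) :
    appset S T = {z | Nat.pair 0 z ∈ AppP (pairify S) (pairify T)} := by
  ext z
  simp only [appset, Set.mem_setOf_eq, mem_AppP, pairify, Nat.unpair_pair]
  constructor
  · rintro ⟨u, hu, hsub⟩
    exact ⟨u, by simpa using hu, fun i hi => by simpa using hsub hi⟩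
  · rintro ⟨u, hu, hsub⟩
    exact ⟨u, by simpa using hu, fun i hi => by simpa using hsub i hi⟩

theorem nice_appset {Y S T WS WT : Set ℕ} (hS : Nice Y S WS) (hT : Nice Y T WT) :
    ∃ W, Nice Y (appset S T) W := by
  have h1 := nice_comap hS pu2
  have h2 := nice_comap hT pu2
  have h3 := nice_AppP h1 h2
  refine ⟨_, nice_congr (appset_eq_comap_AppP S T).symm (nice_comap h3 ?_)⟩
  exact Primrec₂.natPair.comp (Primrec.const 0) Primrec.id

end NiceClosure

section Iteration

/-- Iterated application `G^n(F0)`. -/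
def iterSet (G F0 : Set ℕ) : ℕ → Set ℕ
  | 0 => F0
  | n+1 => appset G (iterSet G F0 n)

/-- Iterated application relative to a fixed finite code `c`. -/
def iterC (WG W0 : Set ℕ) (c : ℕ) : ℕ → Set ℕ
  | 0 => {z | Nat.pair z c ∈ W0}
  | n+1 => appset {p | Nat.pair p c ∈ WG} (iterC WG W0 c n)

/-- The stage-`k` condition for a pair `p = ⟨n, z⟩` to enter the approximation. -/
def condE (g0 gG : ℕ → ℕ → Bool) (c k e p : ℕ) : Bool :=
  if p.unpair.1 = 0 then bAny (k+1) (fun s => g0 (Nat.pair p.unpair.2 c) s)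
  else bAny (k+1) (fun u =>
    bAny (k+1) (fun s => gG (Nat.pair (Nat.pair p.unpair.2 u) c) s) &&
    bAll u (fun i => !u.testBit i || e.testBit (Nat.pair (p.unpair.1 - 1) i)))

def foldOr (f : ℕ → Bool) (m : ℕ) : ℕ :=
  Nat.rec 0 (fun p acc => acc + cond (f p) (2^p) 0) m

theorem foldOr_lt {f : ℕ → Bool} {m : ℕ} : foldOr f m < 2^m := by
  induction m with
  | zero => exact Nat.zero_lt_one
  | succ m ih =>
    show foldOr f m + cond (f m) (2^m) 0 < 2^(m+1)
    have h2 : (2:ℕ)^(m+1) = 2^m + 2^m := by rw [pow_succ]; ring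
    cases f m with
    | false => simpa using lt_of_lt_of_le ih (by omega)
    | true => simpa [h2] using ih

theorem testBit_foldOr {f : ℕ → Bool} {m q : ℕ} :
    (foldOr f m).testBit q = true ↔ q < m ∧ f q = true := by
  induction m with
  | zero => simp [foldOr]
  | succ m ih =>
    show (foldOr f m + cond (f m) (2^m) 0).testBit q = true ↔ _
    cases hf : f m with
    | false =>
      simp only [cond_false, Nat.add_zero, ih]
      constructor
      · rintro ⟨h1, h2⟩; exact ⟨Nat.lt_succ_of_lt h1, h2⟩
      · rintro ⟨h1, h2⟩
        rcases Nat.lt_succ_iff_lt_or_eq.1 h1 with h | rfl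
        · exact ⟨h, h2⟩
        · rw [hf] at h2; exact absurd h2 (by simp)
    | true =>
      simp only [cond_true]
      rcases lt_trichotomy q m with h | rfl | h
      · rw [Nat.add_comm, Nat.testBit_two_pow_add_gt h, ih]
        constructor
        · rintro ⟨_, h2⟩; exact ⟨Nat.lt_succ_of_lt h, h2⟩
        · rintro ⟨_, h2⟩; exact ⟨h, h2⟩
      · rw [Nat.add_comm, Nat.testBit_two_pow_add_eq,
          Nat.testBit_lt_two_pow foldOr_lt]
        simp [hf]
      · have hlt : foldOr f m + 2^m < 2^q := by
          have h1 : foldOr f m + 2^m < 2^(m+1) := by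
            have := @foldOr_lt f m
            have h2 : (2:ℕ)^(m+1) = 2^m + 2^m := by rw [pow_succ]; ring
            omega
          exact lt_of_lt_of_le h1 (Nat.pow_le_pow_right (by norm_num) h)
        rw [Nat.testBit_lt_two_pow hlt]
        constructor
        · intro hc; exact absurd hc (by simp)
        · rintro ⟨h1, _⟩; omega

def stepE (g0 gG : ℕ → ℕ → Bool) (c k e : ℕ) : ℕ :=
  e ||| foldOr (fun p => condE g0 gG c k e p) (k+1)

def EIt (g0 gG : ℕ → ℕ → Bool) (c : ℕ) : ℕ → ℕ :=
  fun k => Nat.rec 0 (fun k' e => stepE g0 gG c k' e) k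

theorem EIt_succ (g0 gG : ℕ → ℕ → Bool) (c k : ℕ) :
    EIt g0 gG c (k+1) = stepE g0 gG c k (EIt g0 gG c k) := rfl

theorem EIt_mono {g0 gG : ℕ → ℕ → Bool} {c k k' p : ℕ} (h : k ≤ k')
    (hp : (EIt g0 gG c k).testBit p = true) : (EIt g0 gG c k').testBit p = true := by
  induction k', h using Nat.le_induction with
  | base => exact hp
  | succ k' hk ih =>
    rw [EIt_succ, stepE, Nat.testBit_lor, ih, Bool.true_or]

section SoundComplete

variable {Y W0 WG F0 G : Set ℕ} {g0 gG : ℕ → ℕ → Bool}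

theorem EIt_sound (hgW0 : ∀ q, q ∈ W0 ↔ ∃ s, g0 q s = true)
    (hgWG : ∀ q, q ∈ WG ↔ ∃ s, gG q s = true) {c : ℕ} :
    ∀ k p, (EIt g0 gG c k).testBit p = true →
      p.unpair.2 ∈ iterC WG W0 c p.unpair.1 := by
  intro k
  induction k with
  | zero => intro p hp; rw [show EIt g0 gG c 0 = 0 from rfl, Nat.zero_testBit] at hp; cases hp
  | succ k ih =>
    intro p hp
    rw [EIt_succ, stepE, Nat.testBit_lor, Bool.or_eq_true] at hp
    rcases hp with hp | hp
    · exact ih p hp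
    · obtain ⟨-, hc⟩ := testBit_foldOr.1 hp
      rw [condE] at hc
      split at hc
      · next h0 =>
        rw [h0]
        obtain ⟨s, -, hs⟩ := bAny_iff.1 hc
        exact (hgW0 _).2 ⟨s, hs⟩
      · next hne =>
        obtain ⟨m, hm⟩ := Nat.exists_eq_succ_of_ne_zero hne
        rw [hm]
        obtain ⟨u, -, hu⟩ := bAny_iff.1 hc
        rw [Bool.and_eq_true] at hu
        obtain ⟨hu1, hu2⟩ := hu
        obtain ⟨s, -, hs⟩ := bAny_iff.1 hu1
        refine ⟨u, (hgWG _).2 ⟨s, hs⟩, ?_⟩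
        intro i hi
        have hlt := lt_of_mem_Du hi
        have := bAll_iff.1 hu2 i hlt
        rw [mem_Du] at hi
        simp only [hi, Bool.not_true, Bool.false_or] at this
        have := ih (Nat.pair (p.unpair.1 - 1) i) this
        simpa [hm] using this

theorem EIt_complete (hgW0 : ∀ q, q ∈ W0 ↔ ∃ s, g0 q s = true)
    (hgWG : ∀ q, q ∈ WG ↔ ∃ s, gG q s = true) {c : ℕ} :
    ∀ n z, z ∈ iterC WG W0 c n → ∃ k, (EIt g0 gG c k).testBit (Nat.pair n z) = true := by
  intro n
  induction n with
  | zero =>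
    intro z hz
    obtain ⟨s, hs⟩ := (hgW0 _).1 hz
    set K := max (Nat.pair 0 z) s with hK
    refine ⟨K + 1, ?_⟩
    rw [EIt_succ, stepE, Nat.testBit_lor, Bool.or_eq_true]
    right
    rw [testBit_foldOr]
    refine ⟨Nat.lt_succ_of_le (le_max_left _ _), ?_⟩
    rw [condE]
    simp only [Nat.unpair_pair, if_true, eq_self_iff_true]
    exact bAny_iff.2 ⟨s, Nat.lt_succ_of_le (le_max_right _ _), hs⟩
  | succ n ih =>
    intro z hz
    obtain ⟨u, huG, hsub⟩ := hz
    obtain ⟨s, hs⟩ := (hgWG _).1 huG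
    have hmono : ∀ k k', k ≤ k' →
        {i | (EIt g0 gG c k).testBit (Nat.pair n i) = true} ⊆
        {i | (EIt g0 gG c k').testBit (Nat.pair n i) = true} :=
      fun k k' hk i hi => EIt_mono hk hi
    obtain ⟨K₀, hK₀⟩ := combineNat hmono (Du_finite u) (fun i hi => ih i (hsub hi))
    set K := max (max (Nat.pair (n+1) z) u) (max s K₀) with hK
    refine ⟨K + 1, ?_⟩
    rw [EIt_succ, stepE, Nat.testBit_lor, Bool.or_eq_true]
    right
    rw [testBit_foldOr]
    refine ⟨Nat.lt_succ_of_le (le_trans (le_max_left _ _) (le_max_left _ _)), ?_⟩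
    rw [condE]
    simp only [Nat.unpair_pair]
    rw [if_neg (Nat.succ_ne_zero n)]
    apply bAny_iff.2
    refine ⟨u, Nat.lt_succ_of_le (le_trans (le_max_right _ _) (le_max_left _ _)), ?_⟩
    rw [Bool.and_eq_true]
    constructor
    · exact bAny_iff.2 ⟨s, Nat.lt_succ_of_le (le_trans (le_max_left _ _) (le_max_right _ _)), hs⟩
    · apply bAll_iff.2
      intro i hilt
      by_cases hb : u.testBit i = true
      · have hiK : (EIt g0 gG c K₀).testBit (Nat.pair n i) = true := hK₀ (mem_Du.2 hb)
        have : (EIt g0 gG c K).testBit (Nat.pair n i) = true :=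
          EIt_mono (le_trans (le_max_right _ _) (le_max_right _ _)) hiK
        simp only [hb, Bool.not_true, Bool.false_or, Nat.succ_sub_one]
        exact this
      · simp [Bool.not_eq_true] at hb; simp [hb]

theorem iterC_mono (hm0 : ∀ x c c', Nat.pair x c ∈ W0 → Du c ⊆ Du c' → Nat.pair x c' ∈ W0)
    (hmG : ∀ x c c', Nat.pair x c ∈ WG → Du c ⊆ Du c' → Nat.pair x c' ∈ WG)
    {c c' : ℕ} (hcc : Du c ⊆ Du c') : ∀ n, iterC WG W0 c n ⊆ iterC WG W0 c' n := by
  intro n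
  induction n with
  | zero => intro z hz; exact hm0 _ _ _ hz hcc
  | succ n ih => exact appset_mono (fun p hp => hmG _ _ _ hp hcc) ih

theorem iterC_sub_iter (h0 : Nice Y F0 W0) (hG : Nice Y G WG) {c : ℕ} (hcY : Du c ⊆ Y) :
    ∀ n, iterC WG W0 c n ⊆ iterSet G F0 n := by
  intro n
  induction n with
  | zero => intro z hz; exact (h0.2.2 z).2 ⟨c, hz, hcY⟩
  | succ n ih => exact appset_mono (fun p hp => (hG.2.2 p).2 ⟨c, hp, hcY⟩) ih

theorem iter_sub_iterC (h0 : Nice Y F0 W0) (hG : Nice Y G WG) :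
    ∀ n z, z ∈ iterSet G F0 n → ∃ c, Du c ⊆ Y ∧ z ∈ iterC WG W0 c n := by
  intro n
  induction n with
  | zero =>
    intro z hz
    obtain ⟨c, hc, hcY⟩ := (h0.2.2 z).1 hz
    exact ⟨c, hcY, hc⟩
  | succ n ih =>
    intro z hz
    obtain ⟨u, huG, hsub⟩ := hz
    obtain ⟨c₁, hc₁, hc₁Y⟩ := (hG.2.2 _).1 huG
    obtain ⟨c₂, hc₂Y, hc₂⟩ := combine (fun c c' hcc => iterC_mono h0.2.1 hG.2.1 hcc n)
      (Du_finite u) (fun i hi => ih i (hsub hi))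
    refine ⟨c₁ ||| c₂, by rw [Du_lor]; exact Set.union_subset hc₁Y hc₂Y, ?_⟩
    refine ⟨u, hG.2.1 _ _ _ hc₁ (by rw [Du_lor]; exact Set.subset_union_left), ?_⟩
    intro i hi
    exact iterC_mono h0.2.1 hG.2.1 (by rw [Du_lor]; exact Set.subset_union_right) n (hc₂ hi)

end SoundComplete

end Iteration

section IterPrimrec

theorem bool_eq_of_iff {b b' : Bool} (h : b = true ↔ b' = true) : b = b' := by
  cases b <;> cases b' <;> simp_all

theorem primrec_foldOr {α : Type*} [Primcodable α] {f : α → ℕ → Bool} {h : α → ℕ}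
    (hh : Primrec h) (hf : Primrec₂ f) : Primrec fun a => foldOr (f a) (h a) := by
  have hpw : Primrec fun q : α × (ℕ × ℕ) => (2:ℕ)^q.2.1 :=
    (primrec_pow2.comp (Primrec.fst.comp Primrec.snd)).of_eq fun q => pow2_eq _
  have hstep : Primrec₂ fun (a : α) (q : ℕ × ℕ) => q.2 + cond (f a q.1) (2^q.1) 0 := by
    have hcond : Primrec fun q : α × (ℕ × ℕ) => (cond (f q.1 q.2.1) (2^q.2.1) 0 : ℕ) :=
      Primrec.cond (hf.comp Primrec.fst (Primrec.fst.comp Primrec.snd)) hpw (Primrec.const 0)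
    exact (Primrec.nat_add.comp (Primrec.snd.comp Primrec.snd) hcond).to₂
  exact (Primrec.nat_rec' hh (Primrec.const 0) hstep).of_eq fun a => rfl

theorem lor_eq_foldOr (m n : ℕ) :
    m ||| n = foldOr (fun p => m.testBit p || n.testBit p) (m + n + 1) := by
  apply Nat.eq_of_testBit_eq
  intro i
  apply bool_eq_of_iff
  rw [Nat.testBit_lor, testBit_foldOr]
  constructor
  · intro hb
    refine ⟨?_, hb⟩
    rcases (Bool.or_eq_true _ _).mp hb with h | h
    · have h2 : i < m := lt_of_mem_Du (mem_Du.2 h)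
      omega
    · have h2 : i < n := lt_of_mem_Du (mem_Du.2 h)
      omega
  · exact fun h => h.2

theorem primrec_lor : Primrec₂ (fun m n : ℕ => m ||| n) := by
  have hf : Primrec₂ fun (p : ℕ × ℕ) (q : ℕ) => p.1.testBit q || p.2.testBit q :=
    (Primrec.dom_bool₂ (· || ·)).comp₂
      (primrec_testBit.comp (Primrec.fst.comp Primrec.fst) Primrec.snd).to₂
      (primrec_testBit.comp (Primrec.snd.comp Primrec.fst) Primrec.snd).to₂
  have hh : Primrec fun p : ℕ × ℕ => p.1 + p.2 + 1 :=
    Primrec.succ.comp (Primrec.nat_add.comp Primrec.fst Primrec.snd)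
  exact ((primrec_foldOr hh hf).of_eq fun p => (lor_eq_foldOr p.1 p.2).symm).to₂

theorem primrec_condE {g0 gG : ℕ → ℕ → Bool} (hg0 : Primrec₂ g0) (hgG : Primrec₂ gG) :
    Primrec fun w : ((ℕ × ℕ) × ℕ) × ℕ => condE g0 gG w.1.1.1 w.1.1.2 w.1.2 w.2 := by
  have pc : Primrec fun w : ((ℕ × ℕ) × ℕ) × ℕ => w.1.1.1 :=
    Primrec.fst.comp (Primrec.fst.comp Primrec.fst)
  have pk : Primrec fun w : ((ℕ × ℕ) × ℕ) × ℕ => w.1.1.2 :=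
    Primrec.snd.comp (Primrec.fst.comp Primrec.fst)
  have pe : Primrec fun w : ((ℕ × ℕ) × ℕ) × ℕ => w.1.2 := Primrec.snd.comp Primrec.fst
  have pp : Primrec fun w : ((ℕ × ℕ) × ℕ) × ℕ => w.2 := Primrec.snd
  have hb1 : Primrec fun w : ((ℕ × ℕ) × ℕ) × ℕ =>
      bAny (w.1.1.2 + 1) (fun s => g0 (Nat.pair w.2.unpair.2 w.1.1.1) s) := by
    refine primrec_bAny (Primrec.succ.comp pk) ?_
    exact (hg0.comp (Primrec₂.natPair.comp (pu2.comp (pp.comp Primrec.fst))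
      (pc.comp Primrec.fst)) Primrec.snd).to₂
  have hb2 : Primrec fun w : ((ℕ × ℕ) × ℕ) × ℕ =>
      bAny (w.1.1.2 + 1) (fun u =>
        bAny (w.1.1.2 + 1) (fun s => gG (Nat.pair (Nat.pair w.2.unpair.2 u) w.1.1.1) s) &&
        bAll u (fun i => !u.testBit i || w.1.2.testBit (Nat.pair (w.2.unpair.1 - 1) i))) := by
    refine primrec_bAny (Primrec.succ.comp pk) ?_
    -- over v : (((ℕ×ℕ)×ℕ)×ℕ) × ℕ, v = (w, u)
    have hbA : Primrec fun v : (((ℕ × ℕ) × ℕ) × ℕ) × ℕ =>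
        bAny (v.1.1.1.2 + 1) (fun s => gG (Nat.pair (Nat.pair v.1.2.unpair.2 v.2) v.1.1.1.1) s) := by
      refine primrec_bAny (Primrec.succ.comp (pk.comp Primrec.fst)) ?_
      exact (hgG.comp (Primrec₂.natPair.comp
        (Primrec₂.natPair.comp (pu2.comp (pp.comp (Primrec.fst.comp Primrec.fst)))
          (Primrec.snd.comp Primrec.fst))
        (pc.comp (Primrec.fst.comp Primrec.fst))) Primrec.snd).to₂
    have hbB : Primrec fun v : (((ℕ × ℕ) × ℕ) × ℕ) × ℕ =>
        bAll v.2 (fun i => !v.2.testBit i || v.1.1.2.testBit (Nat.pair (v.1.2.unpair.1 - 1) i)) := by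
      refine primrec_bAll Primrec.snd ?_
      refine ((Primrec.dom_bool₂ (· || ·)).comp
        ((Primrec.dom_bool (!·)).comp
          (primrec_testBit.comp (Primrec.snd.comp Primrec.fst) Primrec.snd))
        (primrec_testBit.comp (pe.comp (Primrec.fst.comp Primrec.fst))
          (Primrec₂.natPair.comp
            (Primrec.nat_sub.comp (pu1.comp (pp.comp (Primrec.fst.comp Primrec.fst)))
              (Primrec.const 1))
            Primrec.snd))).to₂
    exact ((Primrec.dom_bool₂ (· && ·)).comp hbA hbB).to₂
  have hdec : PrimrecPred fun w : ((ℕ × ℕ) × ℕ) × ℕ => w.2.unpair.1 = 0 :=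
    Primrec.eq.comp (pu1.comp pp) (Primrec.const 0)
  exact (Primrec.ite hdec hb1 hb2).of_eq fun w => by rw [condE]

theorem primrec_EIt {g0 gG : ℕ → ℕ → Bool} (hg0 : Primrec₂ g0) (hgG : Primrec₂ gG) :
    Primrec₂ fun c k => EIt g0 gG c k := by
  have hstepE : Primrec fun w : (ℕ × ℕ) × ℕ => stepE g0 gG w.1.1 w.1.2 w.2 := by
    have hfold : Primrec fun w : (ℕ × ℕ) × ℕ =>
        foldOr (fun p => condE g0 gG w.1.1 w.1.2 w.2 p) (w.1.2 + 1) := by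
      refine primrec_foldOr (Primrec.succ.comp (Primrec.snd.comp Primrec.fst)) ?_
      exact ((primrec_condE hg0 hgG).comp <|
        ((((Primrec.fst.comp (Primrec.fst.comp Primrec.fst)).pair
            (Primrec.snd.comp (Primrec.fst.comp Primrec.fst))).pair
          (Primrec.snd.comp Primrec.fst)).pair Primrec.snd)).to₂
    exact (primrec_lor.comp Primrec.snd hfold).of_eq fun w => rfl
  have h : Primrec₂ fun (a : ℕ × ℕ) (q : ℕ × ℕ) => stepE g0 gG a.1 q.1 q.2 :=
    (hstepE.comp (((Primrec.fst.comp Primrec.fst).pair (Primrec.fst.comp Primrec.snd)).pair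
      (Primrec.snd.comp Primrec.snd))).to₂
  exact (Primrec.nat_rec' Primrec.snd (Primrec.const 0) h).of_eq fun a => rfl

end IterPrimrec

section NiceIter

theorem nice_iter {Y F0 G W0 WG : Set ℕ} (h0 : Nice Y F0 W0) (hG : Nice Y G WG) :
    ∃ W, Nice Y {p : ℕ | p.unpair.2 ∈ iterSet G F0 p.unpair.1} W := by
  obtain ⟨g0, hg0, hgW0⟩ := h0.1
  obtain ⟨gG, hgG, hgWG⟩ := hG.1
  refine ⟨{q | ∃ k, (EIt g0 gG q.unpair.2 k).testBit q.unpair.1 = true},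
    ⟨fun q k => (EIt g0 gG q.unpair.2 k).testBit q.unpair.1, ?_, fun q => Iff.rfl⟩, ?_, ?_⟩
  · exact (primrec_testBit.comp
      ((primrec_EIt hg0 hgG).comp (pu2.comp Primrec.fst) Primrec.snd)
      (pu1.comp Primrec.fst)).to₂
  · -- monotone
    rintro x c c' hx hcc
    simp only [Set.mem_setOf_eq, Nat.unpair_pair] at hx ⊢
    obtain ⟨k, hk⟩ := hx
    have h1 := EIt_sound hgW0 hgWG k x hk
    have h2 := iterC_mono h0.2.1 hG.2.1 hcc x.unpair.1 h1
    obtain ⟨k', hk'⟩ := EIt_complete hgW0 hgWG x.unpair.1 x.unpair.2 h2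
    exact ⟨k', by rwa [Nat.pair_unpair] at hk'⟩
  · -- correctness
    intro p
    simp only [Set.mem_setOf_eq]
    constructor
    · intro hz
      obtain ⟨c, hcY, hc⟩ := iter_sub_iterC h0 hG p.unpair.1 p.unpair.2 hz
      obtain ⟨k, hk⟩ := EIt_complete hgW0 hgWG p.unpair.1 p.unpair.2 hc
      refine ⟨c, ⟨k, ?_⟩, hcY⟩
      simp only [Nat.unpair_pair]
      rwa [Nat.pair_unpair] at hk
    · rintro ⟨c, ⟨k, hk⟩, hcY⟩
      simp only [Nat.unpair_pair] at hk
      have := EIt_sound hgW0 hgWG k p hk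
      exact iterC_sub_iter h0 hG hcY p.unpair.1 this

end NiceIter

section ModelLemmas

theorem mem_gXApp_iff {Z : Set ℕ} {a b c : Gel Z} :
    c ∈ gXApp Z a b ↔ c.1 = appset a.1 b.1 := by
  unfold gXApp subApp
  constructor
  · intro h
    obtain ⟨S, hS, hc⟩ := Part.mem_bind_iff.1 h
    rw [gApp_eq, Part.mem_some_iff] at hS
    subst hS
    obtain ⟨hP, hc⟩ := Part.mem_assert_iff.1 hc
    replace hc := Part.mem_some_iff.1 hc
    rw [hc]
  · intro h
    refine Part.mem_bind_iff.2 ⟨appset a.1 b.1, by rw [gApp_eq]; exact Part.mem_some _, ?_⟩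
    exact Part.mem_assert_iff.2 ⟨h ▸ c.2, Part.mem_some_iff.2 (Subtype.ext h)⟩

theorem mk_mem_gXApp {Z : Set ℕ} (a b : Gel Z) (h : EnumLE (appset a.1 b.1) Z) :
    (⟨appset a.1 b.1, h⟩ : Gel Z) ∈ gXApp Z a b := mem_gXApp_iff.2 rfl

/-- Sets cut out by a primitive recursive predicate are `≤ₑ` anything. -/
theorem enumLE_of_primrec_pred {p : ℕ → Bool} (hp : Primrec p) (Z : Set ℕ) :
    EnumLE {n | p n = true} Z := enumLE_of_nice (nice_of_decidable (Y := Z) hp)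

theorem enumLE_empty (Z : Set ℕ) : EnumLE ∅ Z := by
  have h := enumLE_of_primrec_pred (p := fun _ => false) (Primrec.const false) Z
  have he : {n : ℕ | (false = true)} = (∅ : Set ℕ) := by ext n; simp
  rwa [he] at h

theorem enumLE_univ (Z : Set ℕ) : EnumLE Set.univ Z := by
  have h := enumLE_of_primrec_pred (p := fun _ => true) (Primrec.const true) Z
  have he : {n : ℕ | (true = true)} = (Set.univ : Set ℕ) := by ext n; simp
  rwa [he] at h

theorem enumLE_singleton (n : ℕ) (Z : Set ℕ) : EnumLE {n} Z := by
  have h := enumLE_of_primrec_pred (p := fun m => decide (m = n))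
    (Primrec.eq.comp Primrec.id (Primrec.const n)).decide Z
  have he : {m : ℕ | decide (m = n) = true} = ({n} : Set ℕ) := by ext m; simp
  rwa [he] at h

theorem enumLE_refl (S : Set ℕ) : EnumLE S S := by
  refine ⟨{q | q.unpair.2 = 2^q.unpair.1}, ?_, ?_⟩
  · refine ce1In_iff_ceW.2 ⟨fun q _ => decide (q.unpair.2 = 2^q.unpair.1), ?_, ?_⟩
    · exact (Primrec.eq.comp (pu2.comp Primrec.fst)
        ((primrec_pow2.comp (pu1.comp Primrec.fst)).of_eq fun q => pow2_eq _)).decide.to₂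
    · intro q; simp [Set.mem_setOf_eq]
  · intro x
    constructor
    · intro hx
      refine ⟨2^x, by simp [Set.mem_setOf_eq], ?_⟩
      rw [Du_two_pow]
      simpa using hx
    · rintro ⟨u, hu, hsub⟩
      simp only [Set.mem_setOf_eq, Nat.unpair_pair] at hu
      subst hu
      rw [Du_two_pow] at hsub
      simpa using hsub rfl

/-- Boolean test for powers of two. -/
def pow2b (u : ℕ) : Bool := bAny (u+1) (fun m => decide (u = 2^m))

theorem pow2b_iff {u : ℕ} : pow2b u = true ↔ ∃ m, u = 2^m := by
  rw [pow2b, bAny_iff]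
  constructor
  · rintro ⟨m, _, hm⟩; exact ⟨m, by simpa using hm⟩
  · rintro ⟨m, rfl⟩
    exact ⟨m, Nat.lt_succ_of_lt (Nat.lt_two_pow_self (n := m)), by simp⟩

theorem primrec_pow2b : Primrec pow2b := by
  refine primrec_bAny Primrec.succ ?_
  exact (Primrec.eq.comp Primrec.fst
    ((primrec_pow2.comp Primrec.snd).of_eq fun q => pow2_eq _)).decide.to₂

/-- The "shift" element of the graph model: `gset ⬝ C = C + 1`. -/
def gset : Set ℕ := {q | ∃ m, q = Nat.pair (m+1) (2^m)}

theorem enumLE_gset (Z : Set ℕ) : EnumLE gset Z := by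
  have hp : Primrec fun q => bAny (q+1) (fun m => decide (q = Nat.pair (m+1) (2^m))) := by
    refine primrec_bAny Primrec.succ ?_
    exact (Primrec.eq.comp Primrec.fst
      (Primrec₂.natPair.comp (Primrec.succ.comp Primrec.snd)
        ((primrec_pow2.comp Primrec.snd).of_eq fun q => pow2_eq _))).decide.to₂
  have h := enumLE_of_primrec_pred hp Z
  have he : {q : ℕ | bAny (q+1) (fun m => decide (q = Nat.pair (m+1) (2^m))) = true} = gset := by
    ext q
    rw [Set.mem_setOf_eq, bAny_iff, gset, Set.mem_setOf_eq]
    constructor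
    · rintro ⟨m, _, hm⟩; exact ⟨m, by simpa using hm⟩
    · rintro ⟨m, rfl⟩
      refine ⟨m, ?_, by simp⟩
      have h1 : 2^m ≤ Nat.pair (m+1) (2^m) := Nat.right_le_pair _ _
      have h2 := Nat.lt_two_pow_self (n := m)
      omega
  rwa [he] at h

theorem appset_gset_singleton (n : ℕ) : appset gset {n} = {n+1} := by
  ext z
  rw [appset, Set.mem_setOf_eq]
  constructor
  · rintro ⟨u, ⟨m, hm⟩, hsub⟩
    rw [Nat.pair_eq_pair] at hm
    obtain ⟨rfl, rfl⟩ := hm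
    rw [Du_two_pow] at hsub
    have := hsub rfl
    simp only [Set.mem_singleton_iff] at this ⊢
    omega
  · rintro rfl
    refine ⟨2^n, ⟨n, rfl⟩, ?_⟩
    rw [Du_two_pow]

/-- The "test" element: `tset A B ⬝ {n} = rset A B n`. -/
def rset (A B : Set ℕ) (n : ℕ) : Set ℕ :=
  {q | (∃ a ∈ A, q = Nat.pair a 0) ∨ (∃ b ∈ B, q = Nat.pair b (2^n))}

def tset (A B : Set ℕ) : Set ℕ :=
  {q | ∃ n, (∃ a ∈ A, q = Nat.pair (Nat.pair a 0) (2^n)) ∨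
    (∃ b ∈ B, q = Nat.pair (Nat.pair b (2^n)) (2^n))}

theorem appset_tset (A B : Set ℕ) (n : ℕ) : appset (tset A B) {n} = rset A B n := by
  ext z
  rw [appset, Set.mem_setOf_eq, rset, Set.mem_setOf_eq]
  constructor
  · rintro ⟨u, ⟨m, hm⟩, hsub⟩
    rcases hm with ⟨a, ha, hqa⟩ | ⟨b, hb, hqb⟩
    · rw [Nat.pair_eq_pair] at hqa
      obtain ⟨rfl, rfl⟩ := hqa
      rw [Du_two_pow] at hsub
      have := hsub rfl
      simp only [Set.mem_singleton_iff] at this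
      subst this
      exact Or.inl ⟨a, ha, rfl⟩
    · rw [Nat.pair_eq_pair] at hqb
      obtain ⟨rfl, rfl⟩ := hqb
      rw [Du_two_pow] at hsub
      have := hsub rfl
      simp only [Set.mem_singleton_iff] at this
      subst this
      exact Or.inr ⟨b, hb, rfl⟩
  · rintro (⟨a, ha, rfl⟩ | ⟨b, hb, rfl⟩)
    · exact ⟨2^n, ⟨n, Or.inl ⟨a, ha, rfl⟩⟩, by rw [Du_two_pow]⟩
    · exact ⟨2^n, ⟨n, Or.inr ⟨b, hb, rfl⟩⟩, by rw [Du_two_pow]⟩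

theorem appset_rset {A B : Set ℕ} (X : Set ℕ) (n : ℕ) :
    appset (rset A B n) X = A ∪ {b | b ∈ B ∧ n ∈ X} := by
  ext z
  rw [appset, Set.mem_setOf_eq]
  constructor
  · rintro ⟨u, hmem, hsub⟩
    rcases hmem with ⟨a, ha, hqa⟩ | ⟨b, hb, hqb⟩
    · rw [Nat.pair_eq_pair] at hqa
      obtain ⟨rfl, rfl⟩ := hqa
      exact Or.inl ha
    · rw [Nat.pair_eq_pair] at hqb
      obtain ⟨rfl, rfl⟩ := hqb
      rw [Du_two_pow] at hsub
      exact Or.inr ⟨hb, hsub rfl⟩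
  · rintro (ha | ⟨hb, hn⟩)
    · exact ⟨0, Or.inl ⟨z, ha, rfl⟩, by rw [Du_zero]; exact Set.empty_subset X⟩
    · refine ⟨2^n, Or.inr ⟨z, hb, rfl⟩, ?_⟩
      rw [Du_two_pow]
      simpa using hn

theorem enumLE_tset {X A B : Set ℕ} (hA : EnumLE A X) (hB : EnumLE B X) :
    EnumLE (tset A B) X := by
  obtain ⟨WA, hWA⟩ := nice_of_enumLE hA
  obtain ⟨WB, hWB⟩ := nice_of_enumLE hB
  have hn1 := nice_sep hWA
    (p := fun q => decide (q.unpair.1.unpair.2 = 0) && pow2b q.unpair.2)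
    ((Primrec.dom_bool₂ (· && ·)).comp
      (Primrec.eq.comp (pu2.comp pu1) (Primrec.const 0)).decide (primrec_pow2b.comp pu2))
    (f := fun q => q.unpair.1.unpair.1) (pu1.comp pu1)
  have hn2 := nice_sep hWB
    (p := fun q => decide (q.unpair.1.unpair.2 = q.unpair.2) && pow2b q.unpair.2)
    ((Primrec.dom_bool₂ (· && ·)).comp
      (Primrec.eq.comp (pu2.comp pu1) pu2).decide (primrec_pow2b.comp pu2))
    (f := fun q => q.unpair.1.unpair.1) (pu1.comp pu1)
  have hu := nice_union hn1 hn2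
  refine enumLE_of_nice (nice_congr ?_ hu)
  ext q
  simp only [Set.mem_union, Set.mem_setOf_eq, Bool.and_eq_true, decide_eq_true_eq, pow2b_iff,
    tset]
  constructor
  · rintro (⟨⟨h0, m, hm⟩, ha⟩ | ⟨⟨h0, m, hm⟩, hb⟩)
    · refine ⟨m, Or.inl ⟨q.unpair.1.unpair.1, ha, ?_⟩⟩
      conv_lhs => rw [← Nat.pair_unpair q, ← Nat.pair_unpair q.unpair.1]
      rw [h0, hm]
    · refine ⟨m, Or.inr ⟨q.unpair.1.unpair.1, hb, ?_⟩⟩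
      conv_lhs => rw [← Nat.pair_unpair q, ← Nat.pair_unpair q.unpair.1]
      rw [h0, hm]
  · rintro ⟨m, ⟨a, ha, rfl⟩ | ⟨b, hb, rfl⟩⟩
    · exact Or.inl ⟨by simp [Nat.unpair_pair], by simpa [Nat.unpair_pair] using ha⟩
    · exact Or.inr ⟨by simp [Nat.unpair_pair], by simpa [Nat.unpair_pair] using hb⟩

theorem enumLE_rset {X A B : Set ℕ} (hA : EnumLE A X) (hB : EnumLE B X) (n : ℕ) :
    EnumLE (rset A B n) X := by
  obtain ⟨WA, hWA⟩ := nice_of_enumLE hA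
  obtain ⟨WB, hWB⟩ := nice_of_enumLE hB
  have hn1 := nice_sep hWA (p := fun q => decide (q.unpair.2 = 0))
    (Primrec.eq.comp pu2 (Primrec.const 0)).decide (f := fun q => q.unpair.1) pu1
  have hn2 := nice_sep hWB (p := fun q => decide (q.unpair.2 = 2^n))
    (Primrec.eq.comp pu2 (Primrec.const (2^n))).decide (f := fun q => q.unpair.1) pu1
  have hu := nice_union hn1 hn2
  refine enumLE_of_nice (nice_congr ?_ hu)
  ext q
  simp only [Set.mem_union, Set.mem_setOf_eq, decide_eq_true_eq, rset]
  constructor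
  · rintro (⟨h0, ha⟩ | ⟨h0, hb⟩)
    · refine Or.inl ⟨q.unpair.1, ha, ?_⟩
      conv_lhs => rw [← Nat.pair_unpair q]
      rw [h0]
    · refine Or.inr ⟨q.unpair.1, hb, ?_⟩
      conv_lhs => rw [← Nat.pair_unpair q]
      rw [h0]
  · rintro (⟨a, ha, rfl⟩ | ⟨b, hb, rfl⟩)
    · exact Or.inl ⟨by simp [Nat.unpair_pair], by simpa [Nat.unpair_pair] using ha⟩
    · exact Or.inr ⟨by simp [Nat.unpair_pair], by simpa [Nat.unpair_pair] using hb⟩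

end ModelLemmas

section Backward

theorem enumLE_trans {A X Y : Set ℕ} (hA : EnumLE A X) (hXY : EnumLE X Y) : EnumLE A Y := by
  obtain ⟨W, hce, hiff⟩ := hA
  have hAeq : appset W X = A := by
    ext x
    rw [appset, Set.mem_setOf_eq, ← hiff x]
  obtain ⟨WX, hWX⟩ := nice_of_enumLE hXY
  have hW := nice_of_ceW (Y := Y) (ce1In_iff_ceW.1 hce)
  obtain ⟨W', hW'⟩ := nice_appset hW hWX
  exact enumLE_of_nice (nice_congr hAeq hW')

theorem backward {X Y : Set ℕ} (hXY : EnumLE X Y) :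
    ∃ f : Gel X → Gel Y, IsPCAEmbedding (gXApp X) (gXApp Y) f ∧
      ¬ ∀ A B : Gel X, A.1 ⊆ B.1 → (f B).1 ⊆ (f A).1 := by
  refine ⟨fun a => ⟨a.1, enumLE_trans a.2 hXY⟩, ⟨?_, ?_⟩, ?_⟩
  · intro a b h
    exact Subtype.ext (congrArg Subtype.val h :
      (⟨a.1, enumLE_trans a.2 hXY⟩ : Gel Y).1 = (⟨b.1, enumLE_trans b.2 hXY⟩ : Gel Y).1)
  · intro a b c hc
    have h1 : c.1 = appset a.1 b.1 := mem_gXApp_iff.1 hc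
    exact mem_gXApp_iff.2 h1
  · intro hall
    have h := hall ⟨∅, enumLE_empty X⟩ ⟨Set.univ, enumLE_univ X⟩ (Set.empty_subset _)
    exact h (Set.mem_univ 0)

end Backward

section Forward

theorem forward {X Y : Set ℕ} (f : Gel X → Gel Y)
    (hemb : IsPCAEmbedding (gXApp X) (gXApp Y) f)
    (hrev : ¬ ∀ A B : Gel X, A.1 ⊆ B.1 → (f B).1 ⊆ (f A).1) : EnumLE X Y := by
  push_neg at hrev
  obtain ⟨A, B, hAB, hnsub⟩ := hrev
  rw [Set.not_subset] at hnsub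
  obtain ⟨y₀, hy₀B, hy₀A⟩ := hnsub
  obtain ⟨finj, fapp⟩ := hemb
  have embApp : ∀ (a b : Gel X) (h : EnumLE (appset a.1 b.1) X),
      (f ⟨appset a.1 b.1, h⟩).1 = appset (f a).1 (f b).1 := fun a b h =>
    mem_gXApp_iff.1 (fapp a b ⟨appset a.1 b.1, h⟩ (mk_mem_gXApp a b h))
  -- key1 : the successor step
  have key1 : ∀ n : ℕ, (f ⟨{n+1}, enumLE_singleton (n+1) X⟩).1
      = appset (f ⟨gset, enumLE_gset X⟩).1 (f ⟨{n}, enumLE_singleton n X⟩).1 := by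
    intro n
    have hset : appset gset {n} = {n+1} := appset_gset_singleton n
    have hE : EnumLE (appset gset ({n} : Set ℕ)) X := by
      rw [hset]; exact enumLE_singleton (n+1) X
    have h2 := embApp ⟨gset, enumLE_gset X⟩ ⟨{n}, enumLE_singleton n X⟩ hE
    have h3 : (⟨appset gset {n}, hE⟩ : Gel X) = ⟨{n+1}, enumLE_singleton (n+1) X⟩ :=
      Subtype.ext hset
    rwa [h3] at h2
  -- key2 : applying the test element to a numeral
  have key2 : ∀ n : ℕ, (f ⟨rset A.1 B.1 n, enumLE_rset A.2 B.2 n⟩).1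
      = appset (f ⟨tset A.1 B.1, enumLE_tset A.2 B.2⟩).1 (f ⟨{n}, enumLE_singleton n X⟩).1 := by
    intro n
    have hset : appset (tset A.1 B.1) {n} = rset A.1 B.1 n := appset_tset A.1 B.1 n
    have hE : EnumLE (appset (tset A.1 B.1) ({n} : Set ℕ)) X := by
      rw [hset]; exact enumLE_rset A.2 B.2 n
    have h2 := embApp ⟨tset A.1 B.1, enumLE_tset A.2 B.2⟩ ⟨{n}, enumLE_singleton n X⟩ hE
    have h3 : (⟨appset (tset A.1 B.1) {n}, hE⟩ : Gel X) = ⟨rset A.1 B.1 n, enumLE_rset A.2 B.2 n⟩ :=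
      Subtype.ext hset
    rwa [h3] at h2
  -- key3 : applying the result to X
  have key3 : ∀ n : ℕ, n ∈ X → appset (rset A.1 B.1 n) X = B.1 := by
    intro n hn
    rw [appset_rset X n]
    have : {b | b ∈ B.1 ∧ n ∈ X} = B.1 := by ext b; simp [hn]
    rw [this, Set.union_eq_self_of_subset_left hAB]
  have key3' : ∀ n : ℕ, n ∉ X → appset (rset A.1 B.1 n) X = A.1 := by
    intro n hn
    rw [appset_rset X n]
    have : {b | b ∈ B.1 ∧ n ∈ X} = ∅ := by ext b; simp [hn]
    rw [this, Set.union_empty]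
  have hEr : ∀ n : ℕ, EnumLE (appset (rset A.1 B.1 n) X) X := by
    intro n
    by_cases hn : n ∈ X
    · rw [key3 n hn]; exact B.2
    · rw [key3' n hn]; exact A.2
  -- key4 : image of the test computation
  have key4 : ∀ n : ℕ, n ∈ X → (f B).1
      = appset (appset (f ⟨tset A.1 B.1, enumLE_tset A.2 B.2⟩).1
          (f ⟨{n}, enumLE_singleton n X⟩).1) (f ⟨X, enumLE_refl X⟩).1 := by
    intro n hn
    have h5 := embApp ⟨rset A.1 B.1 n, enumLE_rset A.2 B.2 n⟩ ⟨X, enumLE_refl X⟩ (hEr n)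
    have h6 : (⟨appset (rset A.1 B.1 n) X, hEr n⟩ : Gel X) = B := Subtype.ext (key3 n hn)
    rw [h6] at h5
    rw [h5, key2 n]
  have key4' : ∀ n : ℕ, n ∉ X → (f A).1
      = appset (appset (f ⟨tset A.1 B.1, enumLE_tset A.2 B.2⟩).1
          (f ⟨{n}, enumLE_singleton n X⟩).1) (f ⟨X, enumLE_refl X⟩).1 := by
    intro n hn
    have h5 := embApp ⟨rset A.1 B.1 n, enumLE_rset A.2 B.2 n⟩ ⟨X, enumLE_refl X⟩ (hEr n)
    have h6 : (⟨appset (rset A.1 B.1 n) X, hEr n⟩ : Gel X) = A := Subtype.ext (key3' n hn)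
    rw [h6] at h5
    rw [h5, key2 n]
  -- key5 : the membership criterion
  have key5 : ∀ n : ℕ, (n ∈ X ↔ y₀ ∈ appset (appset (f ⟨tset A.1 B.1, enumLE_tset A.2 B.2⟩).1
      (f ⟨{n}, enumLE_singleton n X⟩).1) (f ⟨X, enumLE_refl X⟩).1) := by
    intro n
    constructor
    · intro hn; rw [← key4 n hn]; exact hy₀B
    · intro hy
      by_contra hn
      rw [← key4' n hn] at hy
      exact hy₀A hy
  -- key6 : numerals as iterates
  have key6 : ∀ n : ℕ, (f ⟨{n}, enumLE_singleton n X⟩).1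
      = iterSet (f ⟨gset, enumLE_gset X⟩).1 (f ⟨{0}, enumLE_singleton 0 X⟩).1 n := by
    intro n
    induction n with
    | zero => rfl
    | succ n ih =>
      show _ = appset _ _
      rw [key1 n, ih]
  -- the Y-c.e. machinery
  obtain ⟨WT, hWT⟩ := nice_of_enumLE (f ⟨tset A.1 B.1, enumLE_tset A.2 B.2⟩).2
  obtain ⟨WX, hWX⟩ := nice_of_enumLE (f ⟨X, enumLE_refl X⟩).2
  obtain ⟨W0, hW0⟩ := nice_of_enumLE (f ⟨{0}, enumLE_singleton 0 X⟩).2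
  obtain ⟨WG, hWG⟩ := nice_of_enumLE (f ⟨gset, enumLE_gset X⟩).2
  obtain ⟨WI, hWI⟩ := nice_iter hW0 hWG
  have hT' := nice_comap hWT pu2
  have h1 := nice_AppP hT' hWI
  have claim1 : AppP {p : ℕ | p.unpair.2 ∈ (f ⟨tset A.1 B.1, enumLE_tset A.2 B.2⟩).1}
      {p : ℕ | p.unpair.2 ∈ iterSet (f ⟨gset, enumLE_gset X⟩).1
        (f ⟨{0}, enumLE_singleton 0 X⟩).1 p.unpair.1}
      = {p : ℕ | p.unpair.2 ∈ appset (f ⟨tset A.1 B.1, enumLE_tset A.2 B.2⟩).1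
          (iterSet (f ⟨gset, enumLE_gset X⟩).1 (f ⟨{0}, enumLE_singleton 0 X⟩).1 p.unpair.1)} := by
    ext p
    rw [AppP, Set.mem_setOf_eq, Set.mem_setOf_eq, appset, Set.mem_setOf_eq]
    constructor
    · rintro ⟨u, hu, hsub⟩
      exact ⟨u, by simpa using hu, fun i hi => by simpa using hsub i hi⟩
    · rintro ⟨u, hu, hsub⟩
      exact ⟨u, by simpa using hu, fun i hi => by simpa using hsub hi⟩
  have hX' := nice_comap hWX pu2
  have h2 := nice_AppP (nice_congr claim1 h1) hX'
  have claim2 : AppP {p : ℕ | p.unpair.2 ∈ appset (f ⟨tset A.1 B.1, enumLE_tset A.2 B.2⟩).1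
        (iterSet (f ⟨gset, enumLE_gset X⟩).1 (f ⟨{0}, enumLE_singleton 0 X⟩).1 p.unpair.1)}
      {p : ℕ | p.unpair.2 ∈ (f ⟨X, enumLE_refl X⟩).1}
      = {p : ℕ | p.unpair.2 ∈ appset (appset (f ⟨tset A.1 B.1, enumLE_tset A.2 B.2⟩).1
          (iterSet (f ⟨gset, enumLE_gset X⟩).1 (f ⟨{0}, enumLE_singleton 0 X⟩).1 p.unpair.1))
          (f ⟨X, enumLE_refl X⟩).1} := by
    ext p
    rw [AppP, Set.mem_setOf_eq, Set.mem_setOf_eq]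
    show _ ↔ p.unpair.2 ∈ appset _ _
    rw [appset, Set.mem_setOf_eq]
    constructor
    · rintro ⟨u, hu, hsub⟩
      exact ⟨u, by simpa using hu, fun i hi => by simpa using hsub i hi⟩
    · rintro ⟨u, hu, hsub⟩
      exact ⟨u, by simpa using hu, fun i hi => by simpa using hsub hi⟩
  have h3 := nice_comap (nice_congr claim2 h2)
    (Primrec₂.natPair.comp Primrec.id (Primrec.const y₀))
  have claim3 : {n : ℕ | Nat.pair n y₀ ∈ {p : ℕ | p.unpair.2 ∈
      appset (appset (f ⟨tset A.1 B.1, enumLE_tset A.2 B.2⟩).1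
        (iterSet (f ⟨gset, enumLE_gset X⟩).1 (f ⟨{0}, enumLE_singleton 0 X⟩).1 p.unpair.1))
        (f ⟨X, enumLE_refl X⟩).1}} = X := by
    ext n
    rw [Set.mem_setOf_eq, Set.mem_setOf_eq, Nat.unpair_pair]
    show y₀ ∈ appset (appset _ (iterSet _ _ n)) _ ↔ n ∈ X
    rw [← key6 n]
    exact (key5 n).symm
  exact enumLE_of_nice (nice_congr claim3 h3)

end Forward

theorem stmt19 (X Y : Set ℕ) :
    (∃ f : Gel X → Gel Y, IsPCAEmbedding (gXApp X) (gXApp Y) f ∧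
      ¬ ∀ A B : Gel X, A.1 ⊆ B.1 → (f B).1 ⊆ (f A).1) ↔
      EnumLE X Y := by
  constructor
  · rintro ⟨f, hemb, hrev⟩
    exact forward f hemb hrev
  · exact backward

end PCAEmb
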